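/- arXiv:1309.1135 — 2 statements merged into one kernel-verified Lean document; each statement's English description precedes it below -/
import Mathlib

section
/- Let n ≥ 3. There exist constants C₁, C₂ > 0 depending only on n such that for every λ > 0 and all y, η ∈ ℝⁿ with λ < |y| ≤ 4λ, |η| ≥ λ and y ≠ η: (i) if moreover λ < |η| ≤ 2λ, then G_λ(y,η) ≥ C₁·(|y|−λ)·(|η|−λ)·λ^{−n}; (ii) G_λ(y,η) ≤ C₂·(|y|−λ)·(|η|²−λ²)/(λ·|y−η|ⁿ). -/
/-! With `ρ = ‖y - η‖` and `s = (‖y‖/λ)‖y^λ - η‖` (`kelvinDist`), `G_λ = c_n (ρ^{2-n} - s^{2-n})`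
with `c_n = greenConst n`,
and expanding both squares gives `s² = ρ² + (‖y‖² - λ²)(‖η‖² - λ²)/λ²`, so `ρ ≤ s`.
For `k = n - 2 ≥ 1` the elementary bounds
`(s² - ρ²)/(2 s^{k+2}) ≤ ρ^{-k} - s^{-k} ≤ k (s² - ρ²)/(2 ρ^{k+2})`
reduce both estimates to bounds on `s² - ρ²`. For `λ < ‖y‖ ≤ 4λ` we have
`‖y‖² - λ² ≤ 5λ(‖y‖ - λ)`; if moreover `‖η‖ ≤ 2λ`, then `s ≤ λ + ‖y‖‖η‖/λ ≤ 9λ` and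
`s² - ρ² ≥ 4(‖y‖ - λ)(‖η‖ - λ)`. -/

open Metric Set MeasureTheory

noncomputable section

abbrev Euc (n : ℕ) := EuclideanSpace ℝ (Fin n)

/-- The inverted point `y^λ = λ²y/|y|²`. -/
def invPt {n : ℕ} (lam : ℝ) (y : Euc n) : Euc n := (lam ^ 2 / ‖y‖ ^ 2) • y

/-- Surface measure `σₙ` of the unit sphere in `ℝⁿ` (equal to `n·vol(Bⁿ)`). -/
def sphereArea (n : ℕ) : ℝ :=
  (n : ℝ) * (volume (Metric.ball (0 : Euc n) 1)).toReal

/-- The Dirichlet Green's function of `-Δ` on `ℝⁿ ∖ cl(B(0,λ))`. -/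
def greenG (n : ℕ) (lam : ℝ) (y η : Euc n) : ℝ :=
  (1 / (((n : ℝ) - 2) * sphereArea n)) *
    (‖y - η‖ ^ ((2 : ℝ) - (n : ℝ))
      - (‖y‖ / lam) ^ ((2 : ℝ) - (n : ℝ)) * ‖invPt lam y - η‖ ^ ((2 : ℝ) - (n : ℝ)))

def greenConst (n : ℕ) : ℝ := 1 / (((n : ℝ) - 2) * sphereArea n)

def kelvinDist {n : ℕ} (lam : ℝ) (y η : Euc n) : ℝ := ‖y‖ / lam * ‖invPt lam y - η‖

theorem inv_pow_sub_inv_pow_le {ρ s : ℝ} (k : ℕ) (hρ : 0 < ρ) (hρs : ρ ≤ s) :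
    (ρ ^ k)⁻¹ - (s ^ k)⁻¹ ≤ k * (s ^ 2 - ρ ^ 2) / (2 * ρ ^ (k + 2)) := by
  obtain _ | k := k
  · simp
  have hs : 0 < s := hρ.trans_le hρs
  have hdiff : s ^ (k + 1) - ρ ^ (k + 1) ≤ (s - ρ) * (k + 1 : ℕ) * s ^ k := by
    simpa [abs_of_nonneg hs.le, abs_of_nonneg hρ.le, abs_of_nonneg (sub_nonneg.2 hρs),
      abs_of_nonneg (sub_nonneg.2 (pow_le_pow_left₀ hρ.le hρs (k + 1))), max_eq_left hρs]
      using abs_pow_sub_pow_le s ρ (k + 1)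
  have hsq : 2 * ρ ^ 2 ≤ (s + ρ) * s := by nlinarith
  rw [inv_sub_inv (by positivity) (by positivity), div_le_div_iff₀ (by positivity) (by positivity)]
  calc (s ^ (k + 1) - ρ ^ (k + 1)) * (2 * ρ ^ (k + 1 + 2))
      ≤ (s - ρ) * (k + 1 : ℕ) * s ^ k * (2 * ρ ^ (k + 1 + 2)) := by gcongr
    _ = (k + 1 : ℕ) * (s - ρ) * s ^ k * ρ ^ (k + 1) * (2 * ρ ^ 2) := by ring
    _ ≤ (k + 1 : ℕ) * (s - ρ) * s ^ k * ρ ^ (k + 1) * ((s + ρ) * s) := by gcongr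
    _ = (k + 1 : ℕ) * (s ^ 2 - ρ ^ 2) * (ρ ^ (k + 1) * s ^ (k + 1)) := by ring

theorem le_inv_pow_sub_inv_pow {ρ s : ℝ} {k : ℕ} (hk : k ≠ 0) (hρ : 0 < ρ) (hρs : ρ ≤ s) :
    (s ^ 2 - ρ ^ 2) / (2 * s ^ (k + 2)) ≤ (ρ ^ k)⁻¹ - (s ^ k)⁻¹ := by
  obtain ⟨k, rfl⟩ := Nat.exists_eq_succ_of_ne_zero hk
  have hs : 0 < s := hρ.trans_le hρs
  have hdiff : (s - ρ) * s ^ k ≤ s ^ (k + 1) - ρ ^ (k + 1) := by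
    have := mul_le_mul_of_nonneg_left (pow_le_pow_left₀ hρ.le hρs k) hρ.le
    rw [pow_succ, pow_succ]; nlinarith
  have hsq : s + ρ ≤ 2 * s := by linarith
  rw [inv_sub_inv (by positivity) (by positivity), div_le_div_iff₀ (by positivity) (by positivity)]
  calc (s ^ 2 - ρ ^ 2) * (ρ ^ (k + 1) * s ^ (k + 1))
      = (s - ρ) * s ^ k * ((s + ρ) * s * ρ ^ (k + 1)) := by ring
    _ ≤ (s - ρ) * s ^ k * (2 * s * s * s ^ (k + 1)) := by gcongr
    _ ≤ (s ^ (k + 1) - ρ ^ (k + 1)) * (2 * s ^ (k + 1 + 2)) := by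
        rw [show 2 * s * s * s ^ (k + 1) = 2 * s ^ (k + 1 + 2) by ring]
        gcongr

section

variable {n : ℕ}

theorem sphereArea_pos (hn : n ≠ 0) : 0 < sphereArea n := by
  have : 0 < (volume (ball (0 : Euc n) 1)).toReal :=
    ENNReal.toReal_pos (measure_ball_pos _ _ one_pos).ne' measure_ball_lt_top.ne
  have : (0 : ℝ) < n := by exact_mod_cast Nat.pos_of_ne_zero hn
  unfold sphereArea
  positivity

theorem greenConst_nonneg (hn : 2 ≤ n) : 0 ≤ greenConst n := by
  have : (0 : ℝ) ≤ n - 2 := by rw [sub_nonneg]; exact_mod_cast hn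
  unfold greenConst sphereArea
  positivity

theorem greenConst_pos (hn : 3 ≤ n) : 0 < greenConst n := by
  have : (0 : ℝ) < n - 2 := by rw [sub_pos]; exact_mod_cast hn
  have := sphereArea_pos (n := n) (by omega)
  unfold greenConst
  positivity

theorem norm_invPt (lam : ℝ) {y : Euc n} (hy : y ≠ 0) :
    ‖invPt lam y‖ = lam ^ 2 / ‖y‖ := by
  have : 0 < ‖y‖ := norm_pos_iff.2 hy
  rw [invPt, norm_smul, Real.norm_of_nonneg (by positivity)]
  field_simp

theorem kelvinDist_sq {lam : ℝ} (hlam : lam ≠ 0) {y : Euc n} (hy : y ≠ 0) (η : Euc n) :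
    kelvinDist lam y η ^ 2
      = ‖y - η‖ ^ 2 + (‖y‖ ^ 2 - lam ^ 2) * (‖η‖ ^ 2 - lam ^ 2) / lam ^ 2 := by
  have : ‖y‖ ≠ 0 := norm_ne_zero_iff.2 hy
  rw [kelvinDist, mul_pow, norm_sub_sq_real, norm_sub_sq_real, norm_invPt lam hy, invPt,
    real_inner_smul_left]
  field_simp
  ring

theorem kelvinDist_le {lam : ℝ} (hlam : 0 < lam) {y : Euc n} (hy : y ≠ 0) (η : Euc n) :
    kelvinDist lam y η ≤ lam + ‖y‖ * ‖η‖ / lam := by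
  have : 0 < ‖y‖ := norm_pos_iff.2 hy
  calc kelvinDist lam y η ≤ ‖y‖ / lam * (‖invPt lam y‖ + ‖η‖) := by
        unfold kelvinDist; gcongr; exact norm_sub_le _ _
    _ = lam + ‖y‖ * ‖η‖ / lam := by rw [norm_invPt lam hy]; field_simp

theorem norm_sub_le_kelvinDist {lam : ℝ} (hlam : 0 < lam) {y η : Euc n}
    (hy : lam ≤ ‖y‖) (hη : lam ≤ ‖η‖) : ‖y - η‖ ≤ kelvinDist lam y η := by
  have hy0 : y ≠ 0 := norm_pos_iff.1 (hlam.trans_le hy)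
  rw [← sq_le_sq₀ (norm_nonneg _) (by unfold kelvinDist; positivity),
    kelvinDist_sq hlam.ne' hy0]
  have : 0 ≤ (‖y‖ ^ 2 - lam ^ 2) * (‖η‖ ^ 2 - lam ^ 2) / lam ^ 2 := by
    have : lam ^ 2 ≤ ‖y‖ ^ 2 := by gcongr
    have : lam ^ 2 ≤ ‖η‖ ^ 2 := by gcongr
    apply div_nonneg _ (sq_nonneg _)
    apply mul_nonneg <;> linarith
  linarith

theorem greenG_eq (hn : 2 ≤ n) {lam : ℝ} (hlam : 0 ≤ lam) (y η : Euc n) :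
    greenG n lam y η
      = greenConst n * ((‖y - η‖ ^ (n - 2))⁻¹ - (kelvinDist lam y η ^ (n - 2))⁻¹) := by
  have hexp : (2 : ℝ) - n = -((n - 2 : ℕ) : ℝ) := by push_cast [Nat.cast_sub hn]; ring
  rw [greenG, greenConst, kelvinDist, hexp, ← Real.mul_rpow (by positivity) (norm_nonneg _),
    Real.rpow_neg (norm_nonneg _), Real.rpow_neg (by positivity), Real.rpow_natCast,
    Real.rpow_natCast]

theorem greenG_lower_bound (hn : 3 ≤ n) {lam : ℝ} (hlam : 0 < lam) {y η : Euc n}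
    (hy₁ : lam ≤ ‖y‖) (hy₄ : ‖y‖ ≤ 4 * lam) (hη₁ : lam ≤ ‖η‖) (hη₂ : ‖η‖ ≤ 2 * lam)
    (hne : y ≠ η) :
    2 * greenConst n / 9 ^ n * (‖y‖ - lam) * (‖η‖ - lam) * lam ^ (-(n : ℝ))
      ≤ greenG n lam y η := by
  have hy0 : y ≠ 0 := norm_pos_iff.1 (hlam.trans_le hy₁)
  have hρ : 0 < ‖y - η‖ := norm_sub_pos_iff.2 hne
  have hρs := norm_sub_le_kelvinDist hlam hy₁ hη₁
  have hs : 0 < kelvinDist lam y η := hρ.trans_le hρs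
  have hs9 : kelvinDist lam y η ≤ 9 * lam := by
    have : ‖y‖ * ‖η‖ / lam ≤ 8 * lam := by
      rw [div_le_iff₀ hlam]; nlinarith [norm_nonneg η]
    linarith [kelvinDist_le hlam hy0 η]
  have hgap : 4 * ((‖y‖ - lam) * (‖η‖ - lam)) ≤ kelvinDist lam y η ^ 2 - ‖y - η‖ ^ 2 := by
    rw [kelvinDist_sq hlam.ne' hy0, add_sub_cancel_left, le_div_iff₀ (by positivity)]
    have := mul_le_mul (show 2 * lam * (‖y‖ - lam) ≤ ‖y‖ ^ 2 - lam ^ 2 by nlinarith)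
      (show 2 * lam * (‖η‖ - lam) ≤ ‖η‖ ^ 2 - lam ^ 2 by nlinarith) (by nlinarith) (by nlinarith)
    linarith
  have hn2 : n - 2 + 2 = n := Nat.sub_add_cancel (by omega)
  have hc := greenConst_nonneg (n := n) (by omega)
  have hgap_nonneg := sub_nonneg.2 (pow_le_pow_left₀ hρ.le hρs 2)
  calc 2 * greenConst n / 9 ^ n * (‖y‖ - lam) * (‖η‖ - lam) * lam ^ (-(n : ℝ))
      = greenConst n * (4 * ((‖y‖ - lam) * (‖η‖ - lam))) / (2 * (9 * lam) ^ n) := by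
        rw [Real.rpow_neg hlam.le, Real.rpow_natCast, mul_pow]
        field_simp
        ring
    _ ≤ greenConst n * ((kelvinDist lam y η ^ 2 - ‖y - η‖ ^ 2)
          / (2 * kelvinDist lam y η ^ (n - 2 + 2))) := by
        rw [hn2, ← mul_div_assoc]
        gcongr
    _ ≤ greenConst n * ((‖y - η‖ ^ (n - 2))⁻¹ - (kelvinDist lam y η ^ (n - 2))⁻¹) := by
        gcongr
        exact le_inv_pow_sub_inv_pow (by omega) hρ hρs
    _ = greenG n lam y η := (greenG_eq (by omega) hlam.le y η).symm

theorem greenG_upper_bound (hn : 2 ≤ n) {lam : ℝ} (hlam : 0 < lam) {y η : Euc n}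
    (hy₁ : lam ≤ ‖y‖) (hy₄ : ‖y‖ ≤ 4 * lam) (hη₁ : lam ≤ ‖η‖) (hne : y ≠ η) :
    greenG n lam y η
      ≤ 5 * ((n : ℝ) - 2) * greenConst n / 2 * (‖y‖ - lam) * (‖η‖ ^ 2 - lam ^ 2)
        / (lam * ‖y - η‖ ^ n) := by
  have hy0 : y ≠ 0 := norm_pos_iff.1 (hlam.trans_le hy₁)
  have hρ : 0 < ‖y - η‖ := norm_sub_pos_iff.2 hne
  have hn2 : n - 2 + 2 = n := Nat.sub_add_cancel hn
  have hk : ((n - 2 : ℕ) : ℝ) = n - 2 := by push_cast [Nat.cast_sub hn]; ring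
  have hc := greenConst_nonneg hn
  have hk_nonneg : 0 ≤ (n : ℝ) - 2 := by rw [← hk]; positivity
  calc greenG n lam y η
      = greenConst n * ((‖y - η‖ ^ (n - 2))⁻¹ - (kelvinDist lam y η ^ (n - 2))⁻¹) :=
        greenG_eq hn hlam.le y η
    _ ≤ greenConst n * ((n - 2 : ℕ) * (kelvinDist lam y η ^ 2 - ‖y - η‖ ^ 2)
          / (2 * ‖y - η‖ ^ (n - 2 + 2))) := by
        gcongr
        exact inv_pow_sub_inv_pow_le _ hρ (norm_sub_le_kelvinDist hlam hy₁ hη₁)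
    _ = greenConst n * ((n : ℝ) - 2) * ((‖y‖ + lam) * (‖y‖ - lam) * (‖η‖ ^ 2 - lam ^ 2))
          / (2 * lam ^ 2 * ‖y - η‖ ^ n) := by
        rw [kelvinDist_sq hlam.ne' hy0, hn2, hk]
        field_simp
        ring
    _ ≤ greenConst n * ((n : ℝ) - 2) * ((5 * lam) * (‖y‖ - lam) * (‖η‖ ^ 2 - lam ^ 2))
          / (2 * lam ^ 2 * ‖y - η‖ ^ n) := by
        gcongr
        · nlinarith
        · linarith
    _ = 5 * ((n : ℝ) - 2) * greenConst n / 2 * (‖y‖ - lam) * (‖η‖ ^ 2 - lam ^ 2)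
          / (lam * ‖y - η‖ ^ n) := by
        field_simp

end

/-- Green's function estimates for `λ < |y| ≤ 4λ`. -/
theorem green_estimates_y_small (n : ℕ) (hn : 3 ≤ n) :
    ∃ C₁ : ℝ, 0 < C₁ ∧ ∃ C₂ : ℝ, 0 < C₂ ∧
      ∀ lam : ℝ, 0 < lam → ∀ y η : Euc n,
        lam < ‖y‖ → ‖y‖ ≤ 4 * lam → lam ≤ ‖η‖ → y ≠ η →
          ((lam < ‖η‖ → ‖η‖ ≤ 2 * lam →
            C₁ * (‖y‖ - lam) * (‖η‖ - lam) * lam ^ (-(n : ℝ)) ≤ greenG n lam y η) ∧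
           greenG n lam y η
              ≤ C₂ * (‖y‖ - lam) * (‖η‖ ^ 2 - lam ^ 2) / (lam * ‖y - η‖ ^ n)) := by
  have hc := greenConst_pos hn
  have hk : (0 : ℝ) < n - 2 := by rw [sub_pos]; exact_mod_cast hn
  refine ⟨2 * greenConst n / 9 ^ n, by positivity, 5 * ((n : ℝ) - 2) * greenConst n / 2,
    by positivity, fun lam hlam y η hy₁ hy₄ hη₁ hne => ⟨fun _ hη₂ => ?_, ?_⟩⟩
  · exact greenG_lower_bound hn hlam hy₁.le hy₄ hη₁ hη₂ hne
  · exact greenG_upper_bound (by omega) hlam hy₁.le hy₄ hη₁ hne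
end
end

section
/- Let n ≥ 4 and C₀, Λ > 0. There exists a constant C > 0 depending only on n, C₀ and Λ with the following property. Let Γ ≥ 1, ρ > 0, x ∈ ℝⁿ, and let K ∈ C^{n−2}(cl(B(x,ρ))) with δ := ‖∇K(x)‖ > 0, satisfying ‖∇ʲK(x)‖ ≤ C₀·δ^{(n−2−j)/(n−3)} for j = 1,…,n−2 and sup over B(x,ρ) of ‖∇^{n−2}K‖ ≤ Λ. Set ℓ = δ^{1/(n−3)}·Γ. Then for all z, w ∈ ℝⁿ with |z| ≤ ρΓ and |w| ≤ ρΓ, |K(x + Γ^{−1}z) − K(x + Γ^{−1}w)| ≤ C·Γ^{−1}·δ·|z − w|·Σ_{j=0}^{n−3} ℓ^{−j}·max(1,|z|,|w|)^j. -/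
open Metric Set

noncomputable section

/-!
On the ball `B(x, r)` with `r = Γ⁻¹ · max(|z|, |w|)`, a Taylor expansion of `∇K` around `x`,
with remainder controlled by `Λ`, bounds `‖∇K‖` by `∑_{j < n-3} ‖∇^{j+1} K(x)‖ rʲ + Λ r^{n-3}`,
and the mean value theorem turns this into the increment estimate. Flatness gives
`‖∇^{j+1} K(x)‖ ≤ C₀ δ^{(n-3-j)/(n-3)}`, and `δ^{(n-3-j)/(n-3)} Γ^{-j} = δ ℓ^{-j}`, so every term
of the sum, including the remainder, is at most `max C₀ Λ · δ ℓ^{-j} max(1, |z|, |w|)ʲ`.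
-/

theorem forall_closedBall_le_of_forall_ball {E : Type*} [NormedAddCommGroup E] [NormedSpace ℝ E]
    {g : E → ℝ} {x : E} {ρ Λ : ℝ} (hρ : ρ ≠ 0) (hg : ContinuousOn g (closedBall x ρ))
    (h : ∀ y ∈ ball x ρ, g y ≤ Λ) : ∀ y ∈ closedBall x ρ, g y ≤ Λ := by
  rw [← closure_ball x hρ] at hg ⊢
  exact le_on_closure h hg continuousOn_const

section Taylor

universe u

variable {E : Type u} [NormedAddCommGroup E] [NormedSpace ℝ E] {s : Set E} {x : E} {r Λ : ℝ}

theorem Convex.norm_image_sub_le_of_norm_fderivWithin_le_of_subset {F : Type*}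
    [NormedAddCommGroup F] [NormedSpace ℝ F] {f : E → F} {t : Set E} {C : ℝ} (ht : Convex ℝ t)
    (hts : t ⊆ s) (hf : DifferentiableOn ℝ f s) (bound : ∀ u ∈ t, ‖fderivWithin ℝ f s u‖ ≤ C)
    {a b : E} (ha : a ∈ t) (hb : b ∈ t) : ‖f b - f a‖ ≤ C * ‖b - a‖ :=
  ht.norm_image_sub_le_of_norm_hasFDerivWithin_le
    (fun u hu => (hf u (hts hu)).hasFDerivWithinAt.mono hts) bound ha hb

/- `F` lives in the universe of `E` so that the induction can pass from `f` to
`fderivWithin ℝ f s`, which takes values in `E →L[ℝ] F`. -/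
theorem norm_le_of_norm_iteratedFDerivWithin_le {F : Type u} [NormedAddCommGroup F]
    [NormedSpace ℝ F] (hs : UniqueDiffOn ℝ s) (hconv : Convex ℝ s) (hx : x ∈ s) {m : ℕ}
    {f : E → F} (hf : ContDiffOn ℝ m f s)
    (hΛ : ∀ y ∈ s ∩ closedBall x r, ‖iteratedFDerivWithin ℝ m f s y‖ ≤ Λ)
    {y : E} (hy : y ∈ s ∩ closedBall x r) :
    ‖f y‖ ≤ ∑ j ∈ Finset.range m, ‖iteratedFDerivWithin ℝ j f s x‖ * r ^ j + Λ * r ^ m := by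
  have hr : 0 ≤ r := dist_nonneg.trans hy.2
  have hxr : x ∈ s ∩ closedBall x r := ⟨hx, mem_closedBall_self hr⟩
  induction m generalizing F f y with
  | zero => simpa using hΛ y hy
  | succ m ih =>
    set Cs := ∑ j ∈ Finset.range m, ‖iteratedFDerivWithin ℝ (j + 1) f s x‖ * r ^ j + Λ * r ^ m
    have hderiv : ∀ u ∈ s ∩ closedBall x r, ‖fderivWithin ℝ f s u‖ ≤ Cs := by
      intro u hu
      have := ih (hf.fderivWithin hs (by exact_mod_cast le_rfl))
        (fun v hv => (norm_iteratedFDerivWithin_fderivWithin hs hv.1).trans_le (hΛ v hv)) hu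
      simpa only [norm_iteratedFDerivWithin_fderivWithin hs hx] using this
    have hCs : 0 ≤ Cs := (norm_nonneg _).trans (hderiv x hxr)
    have hincr : ‖f y - f x‖ ≤ Cs * ‖y - x‖ :=
      (hconv.inter (convex_closedBall x r)).norm_image_sub_le_of_norm_fderivWithin_le_of_subset
        inter_subset_left (hf.differentiableOn (by simp)) hderiv hxr hy
    have hyx : ‖y - x‖ ≤ r := by simpa [dist_eq_norm] using hy.2
    calc ‖f y‖ ≤ ‖f x‖ + ‖f y - f x‖ := norm_le_insert' _ _
      _ ≤ ‖f x‖ + Cs * r := by gcongr; exact hincr.trans (by gcongr)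
      _ = _ := by
        rw [Finset.sum_range_succ', norm_iteratedFDerivWithin_zero, add_mul, Finset.sum_mul]
        simp only [pow_succ, mul_assoc, pow_zero, mul_one]
        ring

theorem norm_image_sub_le_of_norm_iteratedFDerivWithin_le {F : Type u} [NormedAddCommGroup F]
    [NormedSpace ℝ F] (hs : UniqueDiffOn ℝ s) (hconv : Convex ℝ s) (hx : x ∈ s) {m : ℕ}
    {f : E → F} (hf : ContDiffOn ℝ (m + 1 : ℕ) f s)
    (hΛ : ∀ y ∈ s ∩ closedBall x r, ‖iteratedFDerivWithin ℝ (m + 1) f s y‖ ≤ Λ)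
    {a b : E} (ha : a ∈ s ∩ closedBall x r) (hb : b ∈ s ∩ closedBall x r) :
    ‖f b - f a‖ ≤ (∑ j ∈ Finset.range m, ‖iteratedFDerivWithin ℝ (j + 1) f s x‖ * r ^ j
      + Λ * r ^ m) * ‖b - a‖ := by
  refine (hconv.inter (convex_closedBall x r)).norm_image_sub_le_of_norm_fderivWithin_le_of_subset
    inter_subset_left (hf.differentiableOn (by simp)) (fun u hu => ?_) ha hb
  have := norm_le_of_norm_iteratedFDerivWithin_le hs hconv hx
    (hf.fderivWithin hs (by exact_mod_cast le_rfl))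
    (fun v hv => (norm_iteratedFDerivWithin_fderivWithin hs hv.1).trans_le (hΛ v hv)) hu
  simpa only [norm_iteratedFDerivWithin_fderivWithin hs hx] using this

end Taylor

theorem add_inv_smul_mem_closedBall {E : Type*} [NormedAddCommGroup E] [NormedSpace ℝ E]
    (x : E) {v : E} {Γ m : ℝ} (hΓ : 0 < Γ) (hv : ‖v‖ ≤ m) :
    x + Γ⁻¹ • v ∈ closedBall x (Γ⁻¹ * m) := by
  rw [mem_closedBall, dist_eq_norm, add_sub_cancel_left, norm_smul, norm_inv,
    Real.norm_of_nonneg hΓ.le]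
  gcongr

theorem rpow_sub_div_mul_inv_pow {d δ Γ : ℝ} (hd : d ≠ 0) (hδ : 0 < δ) (hΓ : 0 < Γ) (j : ℕ) :
    δ ^ ((d - j) / d) * Γ⁻¹ ^ j = δ * (δ ^ (1 / d) * Γ) ^ (-(j : ℝ)) := by
  have hexp : (d - j) / d = 1 + 1 / d * -(j : ℝ) := by field_simp; ring
  rw [hexp, Real.rpow_add hδ, Real.rpow_one, Real.mul_rpow (Real.rpow_nonneg hδ.le _) hΓ.le,
    ← Real.rpow_mul hδ.le, Real.rpow_neg hΓ.le, Real.rpow_natCast, ← inv_pow]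
  ring

theorem sum_mul_pow_add_mul_pow_le {d : ℕ} (hd : 0 < d) {δ Γ ℓ r M C Λ : ℝ} (hδ : 0 < δ)
    (hΓ : 0 < Γ) (hℓ : ℓ = δ ^ (1 / (d : ℝ)) * Γ) (hC : 0 ≤ C) (hr : 0 ≤ r) (hrM : r ≤ Γ⁻¹ * M)
    (b : ℕ → ℝ) (hb : ∀ j < d, b j ≤ C * δ ^ (((d : ℝ) - j) / d)) (hΛ : Λ ≤ C) :
    ∑ j ∈ Finset.range d, b j * r ^ j + Λ * r ^ d
      ≤ C * δ * ∑ j ∈ Finset.range (d + 1), ℓ ^ (-(j : ℝ)) * M ^ j := by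
  have hd' : (d : ℝ) ≠ 0 := by positivity
  have hterm (j : ℕ) (a : ℝ) (ha : a ≤ C * δ ^ (((d : ℝ) - j) / d)) :
      a * r ^ j ≤ C * δ * (ℓ ^ (-(j : ℝ)) * M ^ j) :=
    calc a * r ^ j ≤ C * δ ^ (((d : ℝ) - j) / d) * (Γ⁻¹ * M) ^ j := by gcongr
      _ = C * (δ ^ (((d : ℝ) - j) / d) * Γ⁻¹ ^ j) * M ^ j := by ring
      _ = C * δ * (ℓ ^ (-(j : ℝ)) * M ^ j) := by
        rw [rpow_sub_div_mul_inv_pow hd' hδ hΓ, hℓ]; ring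
  rw [Finset.sum_range_succ, mul_add, Finset.mul_sum]
  refine add_le_add (Finset.sum_le_sum fun j hj => ?_) (hterm d _ (by simpa using hΛ))
  exact hterm j _ (hb j (Finset.mem_range.1 hj))

theorem taylor_estimate_flatness_general (n : ℕ) (hn : 4 ≤ n)
    (C₀ Λ : ℝ) (hC₀ : 0 < C₀) :
    ∃ C : ℝ, 0 < C ∧
      ∀ (Γ : ℝ), 1 ≤ Γ → ∀ (ρ : ℝ), 0 < ρ → ∀ (x : Euc n) (K : Euc n → ℝ) (δ ℓ : ℝ),
        δ = ‖iteratedFDerivWithin ℝ 1 K (Metric.closedBall x ρ) x‖ →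
        0 < δ →
        ℓ = δ ^ ((1 : ℝ) / ((n : ℝ) - 3)) * Γ →
        ContDiffOn ℝ (n - 2 : ℕ) K (Metric.closedBall x ρ) →
        (∀ j : ℕ, 1 ≤ j → j ≤ n - 2 →
          ‖iteratedFDerivWithin ℝ j K (Metric.closedBall x ρ) x‖ ≤
            C₀ * δ ^ (((n : ℝ) - 2 - (j : ℝ)) / ((n : ℝ) - 3))) →
        (∀ z ∈ Metric.ball x ρ,
          ‖iteratedFDerivWithin ℝ (n - 2) K (Metric.closedBall x ρ) z‖ ≤ Λ) →
        ∀ z w : Euc n, ‖z‖ ≤ ρ * Γ → ‖w‖ ≤ ρ * Γ →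
          |K (x + Γ⁻¹ • z) - K (x + Γ⁻¹ • w)|
            ≤ C * Γ⁻¹ * δ * ‖z - w‖ *
                ∑ j ∈ Finset.range (n - 2), ℓ ^ (-(j : ℝ)) * max 1 (max ‖z‖ ‖w‖) ^ j := by
  refine ⟨max C₀ Λ, lt_max_of_lt_left hC₀, ?_⟩
  intro Γ hΓ ρ hρ x K δ ℓ _ hδ hℓ hK hflat hbound z w hz hw
  obtain ⟨d, rfl⟩ : ∃ d, n = d + 3 := ⟨n - 3, by omega⟩
  have hΓ0 : 0 < Γ := by linarith
  have hd : ((d + 3 : ℕ) : ℝ) - 3 = d := by push_cast; ring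
  set m₀ := max ‖z‖ ‖w‖
  have hs : UniqueDiffOn ℝ (closedBall x ρ) :=
    uniqueDiffOn_convex (convex_closedBall x ρ) (by simp [interior_closedBall x hρ.ne', hρ])
  have hρ' : Γ⁻¹ * m₀ ≤ ρ := by
    rw [inv_mul_le_iff₀ hΓ0, mul_comm]; exact max_le hz hw
  have hmem (v : Euc (d + 3)) (hv : ‖v‖ ≤ m₀) :
      x + Γ⁻¹ • v ∈ closedBall x ρ ∩ closedBall x (Γ⁻¹ * m₀) :=
    ⟨closedBall_subset_closedBall hρ' (add_inv_smul_mem_closedBall x hΓ0 hv),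
      add_inv_smul_mem_closedBall x hΓ0 hv⟩
  have hflat' : ∀ j < d, ‖iteratedFDerivWithin ℝ (j + 1) K (closedBall x ρ) x‖
      ≤ max C₀ Λ * δ ^ (((d : ℝ) - j) / d) := by
    intro j hj
    have := hflat (j + 1) (by omega) (by omega)
    rw [hd, show ((d + 3 : ℕ) : ℝ) - 2 - ((j + 1 : ℕ) : ℝ) = d - j by push_cast; ring] at this
    exact this.trans (by gcongr; exact le_max_left _ _)
  have hincr := norm_image_sub_le_of_norm_iteratedFDerivWithin_le hs (convex_closedBall x ρ)
    (mem_closedBall_self hρ.le) hK (fun y hy => forall_closedBall_le_of_forall_ball hρ.ne'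
      (hK.continuousOn_iteratedFDerivWithin le_rfl hs).norm hbound y hy.1)
    (hmem w (le_max_right _ _)) (hmem z (le_max_left _ _))
  have hcoef := sum_mul_pow_add_mul_pow_le (by omega) hδ hΓ0 (hd ▸ hℓ)
    (hC₀.le.trans (le_max_left _ _)) (by positivity)
    (mul_le_mul_of_nonneg_left (le_max_right 1 m₀) (by positivity)) _ hflat' (le_max_right C₀ Λ)
  rw [add_sub_add_left_eq_sub, ← smul_sub, norm_smul, norm_inv, Real.norm_of_nonneg hΓ0.le]
    at hincr
  rw [← Real.norm_eq_abs, show d + 3 - 2 = d + 1 from rfl]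
  calc _ ≤ _ := hincr.trans (mul_le_mul_of_nonneg_right hcoef (by positivity))
    _ = _ := by ring

/-- Taylor estimate from flatness (K1) at a point where the gradient has
size `δ`, with the scale `ℓ = δ^{1/(n-3)}·Γ`. -/
theorem taylor_estimate_flatness (n : ℕ) (hn : 4 ≤ n)
    (C₀ Λ : ℝ) (hC₀ : 0 < C₀) (hΛ : 0 < Λ) :
    ∃ C : ℝ, 0 < C ∧
      ∀ (Γ : ℝ), 1 ≤ Γ → ∀ (ρ : ℝ), 0 < ρ → ∀ (x : Euc n) (K : Euc n → ℝ) (δ ℓ : ℝ),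
        δ = ‖iteratedFDerivWithin ℝ 1 K (Metric.closedBall x ρ) x‖ →
        0 < δ →
        ℓ = δ ^ ((1 : ℝ) / ((n : ℝ) - 3)) * Γ →
        ContDiffOn ℝ (n - 2 : ℕ) K (Metric.closedBall x ρ) →
        (∀ j : ℕ, 1 ≤ j → j ≤ n - 2 →
          ‖iteratedFDerivWithin ℝ j K (Metric.closedBall x ρ) x‖ ≤
            C₀ * δ ^ (((n : ℝ) - 2 - (j : ℝ)) / ((n : ℝ) - 3))) →
        (∀ z ∈ Metric.ball x ρ,
          ‖iteratedFDerivWithin ℝ (n - 2) K (Metric.closedBall x ρ) z‖ ≤ Λ) →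
        ∀ z w : Euc n, ‖z‖ ≤ ρ * Γ → ‖w‖ ≤ ρ * Γ →
          |K (x + Γ⁻¹ • z) - K (x + Γ⁻¹ • w)|
            ≤ C * Γ⁻¹ * δ * ‖z - w‖ *
                ∑ j ∈ Finset.range (n - 2), ℓ ^ (-(j : ℝ)) * max 1 (max ‖z‖ ‖w‖) ^ j :=
  taylor_estimate_flatness_general n hn C₀ Λ hC₀
end
end
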